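/- Let p¹, p², …, pⁿ ∈ ℝ² (n ≥ 2) be distinct points and, for j ∈ {2,…,n}, set r_j = (d_{p¹pʲ} + x_{pʲ} − x_{p¹})/2. If k ∈ {2,…,n} satisfies r_k ≤ r_j for all j ∈ {2,…,n} (i.e., pᵏ belongs to the argmin set N_D(p¹)), then pᵏ is a Voronoi neighbor of p¹, i.e., V(p¹) ∩ V(pᵏ) contains at least two distinct points. -/

import Mathlib

noncomputable abbrev Pt := EuclideanSpace ℝ (Fin 2)

/-- The energy-based Voronoi cell of the generator `p i` among the generators `p`. -/
def Vcell {n : ℕ} (p : Fin n → Pt) (i : Fin n) : Set Pt :=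
  {q : Pt | ∀ j : Fin n, j ≠ i → dist (p i) q + p i 0 ≤ dist (p j) q + p j 0}

/-!
Write `E_c(q) = dist c q + c 0` for the energy of a generator `c` at `q`; always `q 0 ≤ E_c(q)`.
Let `a = p 0` and `b = p k`. If `a` and `b` lie on a horizontal line, then on the horizontal ray
to the right of both `E_a = E_b = q 0`, the least possible energy, so the whole ray lies in
`V(a) ∩ V(b)`. Otherwise `0 < r_k < dist a b`, and the point `q*` of the segment `[a, b]` at
distance `r_k` from `a` satisfies `E_a(q*) = E_b(q*) = r_k + a 0`. By the triangle inequality and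
the minimality of `r_k`, every other generator has strictly larger energy at `q*`: equality would
put `p j` on the ray from `a` through `b` with `r_j = r_k`, forcing `p j = b`. Hence near `q*` the
cell intersection is the bisector `E_a = E_b`, and since `E_a - E_b` changes sign along the
segment at `q*`, it vanishes at one point on each half of any small circle around `q*`.
-/

open Metric Filter Topology Real

noncomputable def diskRadius (a b : Pt) : ℝ := (dist a b + b 0 - a 0) / 2

noncomputable def diskPoint (a b : Pt) : Pt := AffineMap.lineMap a b (diskRadius a b / dist a b)

lemma apply_sub_apply_le_dist {ι : Type*} [Fintype ι] (x y : EuclideanSpace ℝ ι) (i : ι) :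
    x i - y i ≤ dist x y :=
  (le_abs_self _).trans (PiLp.dist_apply_le x y i)

theorem exists_two_zeros_in_closedBall_of_sign_change {E : Type*} [NormedAddCommGroup E]
    [InnerProductSpace ℝ E] {F : E → ℝ} (hF : Continuous F) {c u v : E}
    (huv : inner ℝ u v = 0) (hv : v ≠ 0)
    (hpos : 0 < F (c + u)) (hneg : F (c - u) < 0) :
    ∃ q₁ ∈ closedBall c (‖u‖ + ‖v‖), ∃ q₂ ∈ closedBall c (‖u‖ + ‖v‖),
      q₁ ≠ q₂ ∧ F q₁ = 0 ∧ F q₂ = 0 := by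
  set γ : ℝ → E := fun θ => c + cos θ • u + sin θ • v
  have hFγ : Continuous (F ∘ γ) := hF.comp (by fun_prop)
  have hγ₀ : γ 0 = c + u := by simp [γ]
  have hγπ : γ π = c - u := by simp [γ, sub_eq_add_neg]
  have hγ₂π : γ (2 * π) = c + u := by simp [γ]
  have hγc : ∀ θ, γ θ - c = cos θ • u + sin θ • v := fun θ => by simp only [γ]; abel
  have hball : ∀ θ, γ θ ∈ closedBall c (‖u‖ + ‖v‖) := by
    intro θ
    rw [mem_closedBall, dist_eq_norm, hγc]
    refine (norm_add_le _ _).trans (add_le_add ?_ ?_) <;> rw [norm_smul]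
    · exact mul_le_of_le_one_left (norm_nonneg _) (abs_cos_le_one θ)
    · exact mul_le_of_le_one_left (norm_nonneg _) (abs_sin_le_one θ)
  have hinner : ∀ θ, inner ℝ (γ θ - c) v = sin θ * ‖v‖ ^ 2 := by
    intro θ
    rw [hγc, inner_add_left, real_inner_smul_left, real_inner_smul_left, huv,
      real_inner_self_eq_norm_sq]
    ring
  obtain ⟨θ₁, hθ₁, hF₁⟩ : ∃ θ ∈ Set.Ioo 0 π, F (γ θ) = 0 :=
    intermediate_value_Ioo' pi_pos.le hFγ.continuousOn
      ⟨by simpa [hγπ] using hneg, by simpa [hγ₀] using hpos⟩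
  obtain ⟨θ₂, hθ₂, hF₂⟩ : ∃ θ ∈ Set.Ioo π (2 * π), F (γ θ) = 0 :=
    intermediate_value_Ioo (by linarith [pi_pos]) hFγ.continuousOn
      ⟨by simpa [hγπ] using hneg, by simpa [hγ₂π] using hpos⟩
  refine ⟨γ θ₁, hball θ₁, γ θ₂, hball θ₂, fun h => ?_, hF₁, hF₂⟩
  have hsin : sin θ₁ * ‖v‖ ^ 2 = sin θ₂ * ‖v‖ ^ 2 := by rw [← hinner, ← hinner, h]
  have h₁ : 0 < sin θ₁ := sin_pos_of_pos_of_lt_pi hθ₁.1 hθ₁.2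
  have h₂ : sin θ₂ < 0 := by
    rw [← sin_sub_two_pi]
    exact sin_neg_of_neg_of_neg_pi_lt (by linarith [hθ₂.2]) (by linarith [hθ₂.1])
  have : 0 < ‖v‖ ^ 2 := by positivity
  nlinarith

lemma apply_zero_le_dist_add_apply_zero (c q : Pt) : q 0 ≤ dist c q + c 0 := by
  linarith [apply_sub_apply_le_dist q c 0, dist_comm c q]

lemma mem_Vcell_inter_Vcell {n : ℕ} {p : Fin n → Pt} {i k : Fin n} {q : Pt}
    (hik : dist (p i) q + p i 0 = dist (p k) q + p k 0)
    (hj : ∀ j, j ≠ i → j ≠ k → dist (p i) q + p i 0 ≤ dist (p j) q + p j 0) :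
    q ∈ Vcell p i ∩ Vcell p k := by
  refine ⟨fun j hji => ?_, fun j hjk => hik ▸ ?_⟩
  · by_cases hjk : j = k
    · exact hjk ▸ hik.le
    · exact hj j hji hjk
  · by_cases hji : j = i
    · exact hji ▸ le_rfl
    · exact hj j hji hjk

lemma dist_eq_sub_of_apply_one_eq {x y : Pt} (h₁ : x 1 = y 1) (h₀ : x 0 ≤ y 0) :
    dist x y = y 0 - x 0 := by
  rw [EuclideanSpace.dist_eq, Fin.sum_univ_two, h₁, dist_self, Real.dist_eq, sq_abs,
    zero_pow two_ne_zero, add_zero, Real.sqrt_sq_eq_abs, abs_sub_comm, abs_of_nonneg (by linarith)]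

lemma exists_two_mem_Vcell_inter_of_apply_one_eq {n : ℕ} (p : Fin n → Pt) {i k : Fin n}
    (hy : p k 1 = p i 1) :
    ∃ q₁ q₂ : Pt, q₁ ≠ q₂ ∧ q₁ ∈ Vcell p i ∩ Vcell p k ∧ q₂ ∈ Vcell p i ∩ Vcell p k := by
  have hmem : ∀ s, max (p i 0) (p k 0) ≤ s → !₂[s, p i 1] ∈ Vcell p i ∩ Vcell p k := by
    intro s hs
    have hray : ∀ c : Pt, c 1 = p i 1 → c 0 ≤ s → dist c !₂[s, p i 1] + c 0 = s := by
      intro c hc₁ hc₀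
      rw [dist_eq_sub_of_apply_one_eq (by simpa using hc₁) (by simpa using hc₀)]
      simp
    refine mem_Vcell_inter_Vcell ((hray _ rfl (le_of_max_le_left hs)).trans
      (hray _ hy (le_of_max_le_right hs)).symm) fun j _ _ => ?_
    rw [hray _ rfl (le_of_max_le_left hs)]
    simpa using apply_zero_le_dist_add_apply_zero (p j) !₂[s, p i 1]
  refine ⟨_, _, fun h => ?_, hmem _ le_rfl, hmem (max (p i 0) (p k 0) + 1) (by linarith)⟩
  simpa using congrArg (· 0) h

lemma abs_apply_zero_sub_lt_dist {a b : Pt} (hy : b 1 ≠ a 1) : |b 0 - a 0| < dist a b := by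
  have h : dist a b ^ 2 = (b 0 - a 0) ^ 2 + (b 1 - a 1) ^ 2 := by
    rw [EuclideanSpace.dist_eq, Real.sq_sqrt (by positivity), Fin.sum_univ_two, Real.dist_eq,
      Real.dist_eq, sq_abs, sq_abs, ← neg_sub (b 0), ← neg_sub (b 1), neg_sq, neg_sq]
  have h₁ : 0 < (b 1 - a 1) ^ 2 := by positivity [sub_ne_zero.2 hy]
  exact abs_lt_of_sq_lt_sq (by linarith) dist_nonneg

lemma diskRadius_pos {a b : Pt} (hy : b 1 ≠ a 1) : 0 < diskRadius a b := by
  have := abs_lt.1 (abs_apply_zero_sub_lt_dist hy)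
  unfold diskRadius
  linarith

lemma diskRadius_lt_dist {a b : Pt} (hy : b 1 ≠ a 1) : diskRadius a b < dist a b := by
  have := abs_lt.1 (abs_apply_zero_sub_lt_dist hy)
  unfold diskRadius
  linarith

lemma ne_of_diskRadius_pos {a b : Pt} (hr : 0 < diskRadius a b) : a ≠ b := by
  rintro rfl
  simp [diskRadius] at hr

lemma dist_left_diskPoint {a b : Pt} (hr : 0 < diskRadius a b) :
    dist a (diskPoint a b) = diskRadius a b := by
  rw [diskPoint, dist_left_lineMap, Real.norm_of_nonneg (div_nonneg hr.le dist_nonneg),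
    div_mul_cancel₀ _ (dist_ne_zero.2 (ne_of_diskRadius_pos hr))]

lemma dist_add_apply_zero_diskPoint_lt {a b c : Pt} (hr : 0 < diskRadius a b)
    (hc : diskRadius a b ≤ diskRadius a c) (hcb : c ≠ b) :
    dist a (diskPoint a b) + a 0 < dist c (diskPoint a b) + c 0 := by
  set r := diskRadius a b
  set d := dist a b
  set q := diskPoint a b
  have hd : 0 < d := dist_pos.2 (ne_of_diskRadius_pos hr)
  have h2r : 2 * r = d + (b 0 - a 0) := by simp only [r, diskRadius]; ring
  have h2rc : 2 * r ≤ dist c a + (c 0 - a 0) := by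
    rw [dist_comm]; unfold diskRadius at hc; linarith
  have hqa : dist q a = r := by rw [dist_comm]; exact dist_left_diskPoint hr
  rw [dist_comm a q, hqa]
  by_contra! hle
  -- Equality holds in `dist c a ≤ dist c q + dist q a`, so `c` lies on the ray from `a`
  -- through `b`, and then `2 * diskRadius a c = 2 * r` fixes its distance from `a`.
  have htri : ‖(c - q) + (q - a)‖ = ‖c - q‖ + ‖q - a‖ := by
    simp only [sub_add_sub_cancel, ← dist_eq_norm]
    linarith [dist_triangle c q a]
  have hca : dist c a + (c 0 - a 0) = 2 * r := by linarith [dist_triangle c q a]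
  have hray := ((sameRay_iff_norm_add.2 htri).add_left SameRay.rfl).norm_smul_eq
  rw [sub_add_sub_cancel, ← dist_eq_norm, ← dist_eq_norm, hqa,
    show q - a = (r / d) • (b - a) from AffineMap.lineMap_vsub_left a b _] at hray
  set m := dist c a / d
  have hm : dist c a = m * d := (div_mul_cancel₀ _ hd.ne').symm
  have hdir : c - a = m • (b - a) := by
    apply smul_right_injective Pt hr.ne'
    simp only [← hray, smul_smul, hm]
    field_simp
  have hm₁ : m = 1 := by
    have h₀ : c 0 - a 0 = m * (b 0 - a 0) := by simpa using congrArg (· 0) hdir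
    refine mul_right_cancel₀ (by positivity : 2 * r ≠ 0) ?_
    rw [one_mul, h2r]
    linarith
  rw [hm₁, one_smul, sub_left_inj] at hdir
  exact hcb hdir

lemma dist_add_apply_zero_sub_lineMap (a b : Pt) {s : ℝ} (hs₀ : 0 ≤ s) (hs₁ : s ≤ 1) :
    dist a (AffineMap.lineMap a b s) + a 0 - (dist b (AffineMap.lineMap a b s) + b 0) =
      2 * (s * dist a b - diskRadius a b) := by
  rw [dist_left_lineMap, dist_right_lineMap, Real.norm_of_nonneg hs₀,
    Real.norm_of_nonneg (sub_nonneg.2 hs₁), diskRadius]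
  ring

lemma exists_two_bisector_points_near_diskPoint {a b : Pt} (hy : b 1 ≠ a 1) {ρ : ℝ}
    (hρ : 0 < ρ) :
    ∃ q₁ ∈ ball (diskPoint a b) ρ, ∃ q₂ ∈ ball (diskPoint a b) ρ, q₁ ≠ q₂ ∧
      dist a q₁ + a 0 = dist b q₁ + b 0 ∧ dist a q₂ + a 0 = dist b q₂ + b 0 := by
  set d := dist a b
  set t := diskRadius a b / d
  have hd : 0 < d := dist_pos.2 (ne_of_diskRadius_pos (diskRadius_pos hy))
  have ht₀ : 0 < t := div_pos (diskRadius_pos hy) hd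
  have ht₁ : t < 1 := (div_lt_one hd).2 (diskRadius_lt_dist hy)
  set w : Pt := b - a
  set v : Pt := !₂[-(w 1), w 0]
  have hwv : inner ℝ w v = 0 := by
    simp [v, PiLp.inner_apply, Fin.sum_univ_two, mul_comm]
  have hv : v ≠ 0 := fun h => hy (sub_eq_zero.1 (by simpa [v, w] using congrArg (· 0) h)).symm
  obtain ⟨ε, ⟨hεt₀, hεt₁, hερ⟩, hε⟩ :
      ∃ ε, (ε < t ∧ ε < 1 - t ∧ ε * (‖w‖ + ‖v‖) < ρ) ∧ 0 < ε :=
    (((eventually_lt_nhds ht₀).and ((eventually_lt_nhds (sub_pos.2 ht₁)).and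
      (((continuous_mul_const _).tendsto' 0 0 (zero_mul _)).eventually
        (eventually_lt_nhds hρ)))).filter_mono nhdsWithin_le_nhds |>.and
      (self_mem_nhdsWithin : Set.Ioi (0 : ℝ) ∈ 𝓝[>] 0)).exists
  set F : Pt → ℝ := fun q => dist a q + a 0 - (dist b q + b 0)
  have hF : ∀ δ, |δ| ≤ ε → F (diskPoint a b + δ • w) = 2 * (δ * d) := by
    intro δ hδ
    have hline : diskPoint a b + δ • w = AffineMap.lineMap a b (t + δ) := by
      simp only [diskPoint, AffineMap.lineMap_apply_module', w]
      module
    have := abs_le.1 hδ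
    simp only [F, hline]
    rw [dist_add_apply_zero_sub_lineMap a b (by linarith) (by linarith), add_mul,
      div_mul_cancel₀ _ hd.ne', add_sub_cancel_left]
  obtain ⟨q₁, hq₁, q₂, hq₂, hne, hF₁, hF₂⟩ :=
    exists_two_zeros_in_closedBall_of_sign_change (F := F) (by fun_prop)
      (c := diskPoint a b) (u := ε • w) (v := ε • v)
      (by rw [real_inner_smul_left, real_inner_smul_right, hwv, mul_zero, mul_zero])
      (smul_ne_zero hε.ne' hv)
      (by rw [hF ε (abs_of_pos hε).le]; positivity)
      (by rw [sub_eq_add_neg, ← neg_smul, hF (-ε) (by simp [abs_of_pos hε])]; nlinarith)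
  have hsub : closedBall (diskPoint a b) (‖ε • w‖ + ‖ε • v‖) ⊆ ball (diskPoint a b) ρ :=
    closedBall_subset_ball (by rw [norm_smul, norm_smul, Real.norm_of_nonneg hε.le]; linarith)
  exact ⟨q₁, hsub hq₁, q₂, hsub hq₂, hne, sub_eq_zero.1 hF₁, sub_eq_zero.1 hF₂⟩

theorem disk_minimizer_is_voronoi_neighbor_general
    (n : ℕ) (p : Fin (n + 2) → Pt) (hp : Function.Injective p)
    (k : Fin (n + 2))
    (hmin : ∀ j : Fin (n + 2), j ≠ 0 →
      (dist (p 0) (p k) + p k 0 - p 0 0) / 2 ≤ (dist (p 0) (p j) + p j 0 - p 0 0) / 2) :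
    ∃ q1 q2 : Pt, q1 ≠ q2 ∧
      q1 ∈ Vcell p 0 ∩ Vcell p k ∧ q2 ∈ Vcell p 0 ∩ Vcell p k := by
  by_cases hy : p k 1 = p 0 1
  · exact exists_two_mem_Vcell_inter_of_apply_one_eq p hy
  have hstrict : ∀ j, j ≠ 0 → j ≠ k → dist (p 0) (diskPoint (p 0) (p k)) + p 0 0 <
      dist (p j) (diskPoint (p 0) (p k)) + p j 0 := fun j hj hjk =>
    dist_add_apply_zero_diskPoint_lt (diskRadius_pos hy) (hmin j hj) (hp.ne hjk)
  have hnear : ∀ᶠ q in 𝓝 (diskPoint (p 0) (p k)), ∀ j, j ≠ 0 → j ≠ k →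
      dist (p 0) q + p 0 0 < dist (p j) q + p j 0 :=
    eventually_all.2 fun j => eventually_imp_distrib_left.2 fun hj =>
      eventually_imp_distrib_left.2 fun hjk =>
        ContinuousAt.eventually_lt (by fun_prop) (by fun_prop) (hstrict j hj hjk)
  obtain ⟨ρ, hρ, hball⟩ := Metric.eventually_nhds_iff_ball.1 hnear
  obtain ⟨q₁, hq₁, q₂, hq₂, hne, h₁, h₂⟩ := exists_two_bisector_points_near_diskPoint hy hρ
  exact ⟨q₁, q₂, hne, mem_Vcell_inter_Vcell h₁ fun j hj hjk => (hball q₁ hq₁ j hj hjk).le,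
    mem_Vcell_inter_Vcell h₂ fun j hj hjk => (hball q₂ hq₂ j hj hjk).le⟩

/-- if `pᵏ` minimizes `r_j = (d_{p¹pʲ} + x_{pʲ} - x_{p¹})/2` over
`j ∈ {2,…,n}` (here `p 0` plays the role of `p¹`), then `pᵏ` is a Voronoi neighbor of
`p¹`: `V(p¹) ∩ V(pᵏ)` contains at least two distinct points. -/
theorem disk_minimizer_is_voronoi_neighbor
    (n : ℕ) (p : Fin (n + 2) → Pt) (hp : Function.Injective p)
    (k : Fin (n + 2)) (hk : k ≠ 0)
    (hmin : ∀ j : Fin (n + 2), j ≠ 0 →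
      (dist (p 0) (p k) + p k 0 - p 0 0) / 2 ≤ (dist (p 0) (p j) + p j 0 - p 0 0) / 2) :
    ∃ q1 q2 : Pt, q1 ≠ q2 ∧
      q1 ∈ Vcell p 0 ∩ Vcell p k ∧ q2 ∈ Vcell p 0 ∩ Vcell p k :=
  disk_minimizer_is_voronoi_neighbor_general n p hp k hmin
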